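/- Let 0 < γ < 1, T > 0, and let g : ℝ → ℝ be continuous on [0, T] with |g(r)| ≤ G for all r ∈ [0, T]. Let v : ℝ × ℝ → ℝ be such that s ↦ v(x, s) is continuous on [0, T] for each x, |v(x, s)| ≤ M for all x and all s ∈ [0, T], and |v(x, t) − v(y, s)| ≤ H · (|x − y|^γ + |t − s|^{γ/2}) for all x, y ∈ ℝ and s, t ∈ [0, T]. Then for all x, y ∈ ℝ and all s, t ∈ [0, T], |(g *ₜ v)(x, t) − (g *ₛ v)(y, s)| ≤ G · (T · H + T^{1 − γ/2} · M) · (|x − y|^γ + |t − s|^{γ/2}); in particular the parabolic Hölder seminorm of g *ₜ v of exponent γ on ℝ × [0, T] is at most G · (T · H + T^{1 − γ/2} · M). -/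

import Mathlib

/-!
After the substitution `r ↦ t - r`, the difference of the two convolutions (for `s ≤ t`) splits
into `∫₀ˢ g(r) (v(x, t - r) - v(y, s - r)) dr`, bounded by `G s H (|x - y|^γ + |t - s|^{γ/2})`
through the Hölder bound of `v`, and `∫ₛᵗ g(r) v(x, t - r) dr`, bounded by
`G M (t - s) ≤ G M T^{1-γ/2} |t - s|^{γ/2}`.
-/

open Set intervalIntegral

noncomputable def timeConv (g w : ℝ → ℝ) (t : ℝ) : ℝ :=
  ∫ r in (0 : ℝ)..t, g (t - r) * w r

theorem timeConv_eq_integral_mul_comp_sub (g w : ℝ → ℝ) (t : ℝ) :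
    timeConv g w t = ∫ r in (0 : ℝ)..t, g r * w (t - r) := by
  rw [timeConv]
  simpa only [sub_sub_cancel, sub_self, sub_zero] using
    integral_comp_sub_left (a := 0) (b := t) (fun r => g r * w (t - r)) t

theorem ContinuousOn.mul_comp_sub_left {g w : ℝ → ℝ} {t : ℝ}
    (hg : ContinuousOn g (Icc 0 t)) (hw : ContinuousOn w (Icc 0 t)) :
    ContinuousOn (fun r => g r * w (t - r)) (Icc 0 t) :=
  hg.mul <| hw.comp (continuousOn_const.sub continuousOn_id) fun _ ⟨hr0, hrt⟩ =>
    ⟨sub_nonneg.mpr hrt, sub_le_self t hr0⟩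

theorem timeConv_sub_timeConv_of_le {g w₁ w₂ : ℝ → ℝ} {s t : ℝ} (hs : 0 ≤ s) (hst : s ≤ t)
    (hg : ContinuousOn g (Icc 0 t)) (hw₁ : ContinuousOn w₁ (Icc 0 t))
    (hw₂ : ContinuousOn w₂ (Icc 0 s)) :
    timeConv g w₁ t - timeConv g w₂ s =
      (∫ r in (0 : ℝ)..s, g r * (w₁ (t - r) - w₂ (s - r))) + ∫ r in s..t, g r * w₁ (t - r) := by
  have h₁ := hg.mul_comp_sub_left hw₁
  have h₂ := (hg.mono (Icc_subset_Icc_right hst)).mul_comp_sub_left hw₂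
  have h₁₀ : IntervalIntegrable (fun r => g r * w₁ (t - r)) MeasureTheory.volume 0 s :=
    (h₁.mono (Icc_subset_Icc_right hst)).intervalIntegrable_of_Icc hs
  have h₁₁ : IntervalIntegrable (fun r => g r * w₁ (t - r)) MeasureTheory.volume s t :=
    (h₁.mono (Icc_subset_Icc_left hs)).intervalIntegrable_of_Icc hst
  simp only [timeConv_eq_integral_mul_comp_sub, mul_sub,
    integral_sub h₁₀ (h₂.intervalIntegrable_of_Icc hs),
    ← integral_add_adjacent_intervals h₁₀ h₁₁]
  ring

theorem abs_integral_mul_le_of_le {f h : ℝ → ℝ} {a b A B : ℝ} (hab : a ≤ b)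
    (hf : ∀ r ∈ Icc a b, |f r| ≤ A) (hh : ∀ r ∈ Icc a b, |h r| ≤ B) :
    |∫ r in a..b, f r * h r| ≤ A * B * (b - a) := by
  rw [← abs_of_nonneg (sub_nonneg.mpr hab), ← Real.norm_eq_abs]
  refine norm_integral_le_of_norm_le_const fun r hr => ?_
  rw [uIoc_of_le hab] at hr
  have hr' := Ioc_subset_Icc_self hr
  rw [Real.norm_eq_abs, abs_mul]
  exact mul_le_mul (hf r hr') (hh r hr') (abs_nonneg _) ((abs_nonneg _).trans (hf r hr'))

theorem abs_timeConv_sub_timeConv_le {g w₁ w₂ : ℝ → ℝ} {s t G K M : ℝ} (hs : 0 ≤ s)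
    (hst : s ≤ t) (hg : ContinuousOn g (Icc 0 t)) (hw₁ : ContinuousOn w₁ (Icc 0 t))
    (hw₂ : ContinuousOn w₂ (Icc 0 s)) (hgG : ∀ r ∈ Icc 0 t, |g r| ≤ G)
    (hwK : ∀ r ∈ Icc 0 s, |w₁ (t - r) - w₂ (s - r)| ≤ K)
    (hwM : ∀ u ∈ Icc 0 (t - s), |w₁ u| ≤ M) :
    |timeConv g w₁ t - timeConv g w₂ s| ≤ G * K * s + G * M * (t - s) := by
  rw [timeConv_sub_timeConv_of_le hs hst hg hw₁ hw₂]
  have hK := abs_integral_mul_le_of_le hs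
    (fun r hr => hgG r (Icc_subset_Icc_right hst hr)) hwK
  have hM := abs_integral_mul_le_of_le hst
    (fun r hr => hgG r (Icc_subset_Icc_left hs hr))
    (fun r ⟨hsr, hrt⟩ => hwM (t - r) ⟨sub_nonneg.mpr hrt, sub_le_sub_left hsr t⟩)
  rw [sub_zero] at hK
  exact (abs_add_le _ _).trans (add_le_add hK hM)

theorem le_rpow_one_sub_mul_rpow {d T α : ℝ} (hd : 0 ≤ d) (hdT : d ≤ T) (hα : α ≤ 1) :
    d ≤ T ^ (1 - α) * d ^ α := by
  rcases hd.eq_or_lt with rfl | hd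
  · exact mul_nonneg (Real.rpow_nonneg (hd.trans hdT) _) (Real.rpow_nonneg le_rfl _)
  · calc d = d ^ (1 - α) * d ^ α := by rw [← Real.rpow_add hd, sub_add_cancel, Real.rpow_one]
      _ ≤ T ^ (1 - α) * d ^ α := by gcongr

theorem time_convolution_holder_seminorm_bound_general
    (γ T G M H : ℝ) (hγ1 : γ < 1)
    (g : ℝ → ℝ) (v : ℝ → ℝ → ℝ)
    (hg_cont : ContinuousOn g (Set.Icc 0 T))
    (hg_bd : ∀ r ∈ Set.Icc (0 : ℝ) T, |g r| ≤ G)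
    (hv_cont : ∀ x : ℝ, ContinuousOn (fun s => v x s) (Set.Icc 0 T))
    (hv_bd : ∀ x : ℝ, ∀ s ∈ Set.Icc (0 : ℝ) T, |v x s| ≤ M)
    (hv_hol : ∀ x y : ℝ, ∀ s ∈ Set.Icc (0 : ℝ) T, ∀ t ∈ Set.Icc (0 : ℝ) T,
      |v x t - v y s| ≤ H * (|x - y| ^ γ + |t - s| ^ (γ / 2))) :
    ∀ x y : ℝ, ∀ s ∈ Set.Icc (0 : ℝ) T, ∀ t ∈ Set.Icc (0 : ℝ) T,
      |(∫ r in (0 : ℝ)..t, g (t - r) * v x r) - ∫ r in (0 : ℝ)..s, g (s - r) * v y r| ≤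
        G * (T * H + T ^ (1 - γ / 2) * M) * (|x - y| ^ γ + |t - s| ^ (γ / 2)) := by
  suffices key : ∀ x y : ℝ, ∀ s ∈ Icc (0 : ℝ) T, ∀ t ∈ Icc (0 : ℝ) T, s ≤ t →
      |timeConv g (v x) t - timeConv g (v y) s| ≤
        G * (T * H + T ^ (1 - γ / 2) * M) * (|x - y| ^ γ + |t - s| ^ (γ / 2)) by
    intro x y s hs t ht
    rcases le_total s t with hst | hts
    · exact key x y s hs t ht hst
    · rw [abs_sub_comm, abs_sub_comm x, abs_sub_comm t]
      exact key y x t ht s hs hts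
  intro x y s ⟨hs0, hsT⟩ t ⟨ht0, htT⟩ hst
  have h0 : (0 : ℝ) ∈ Icc 0 T := ⟨le_rfl, hs0.trans hsT⟩
  have hG : 0 ≤ G := (abs_nonneg _).trans (hg_bd 0 h0)
  have hM : 0 ≤ M := (abs_nonneg _).trans (hv_bd 0 0 h0)
  have hH : 0 ≤ H := by
    refine nonneg_of_mul_nonneg_left ((abs_nonneg _).trans (hv_hol 0 1 0 h0 0 h0)) ?_
    positivity
  set E := |x - y| ^ γ + |t - s| ^ (γ / 2)
  have hE : |t - s| ^ (γ / 2) ≤ E := le_add_of_nonneg_left (by positivity)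
  have hconv := abs_timeConv_sub_timeConv_le (K := H * E) hs0 hst
    (hg_cont.mono (Icc_subset_Icc_right htT)) ((hv_cont x).mono (Icc_subset_Icc_right htT))
    ((hv_cont y).mono (Icc_subset_Icc_right hsT))
    (fun r ⟨hr0, hrt⟩ => hg_bd r ⟨hr0, hrt.trans htT⟩)
    (fun r ⟨hr0, hrs⟩ => by
      simpa only [sub_sub_sub_cancel_right] using
        hv_hol x y (s - r) ⟨by linarith, by linarith⟩ (t - r) ⟨by linarith, by linarith⟩)
    (fun u ⟨hu0, hut⟩ => hv_bd x u ⟨hu0, by linarith⟩)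
  have hts : t - s ≤ T ^ (1 - γ / 2) * |t - s| ^ (γ / 2) := by
    rw [abs_of_nonneg (sub_nonneg.mpr hst)]
    exact le_rpow_one_sub_mul_rpow (sub_nonneg.mpr hst) (by linarith) (by linarith)
  calc |timeConv g (v x) t - timeConv g (v y) s|
      ≤ G * (H * E) * s + G * M * (t - s) := hconv
    _ ≤ G * (H * E) * T + G * M * (T ^ (1 - γ / 2) * E) := by
        have : 0 ≤ T ^ (1 - γ / 2) := Real.rpow_nonneg (hs0.trans hsT) _
        gcongr
        exact hts.trans (by gcongr)
    _ = G * (T * H + T ^ (1 - γ / 2) * M) * E := by ring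

/-- Parabolic Hölder seminorm estimate of Lemma A.1: the time convolution
`g *ₜ v` has parabolic Hölder seminorm of exponent `γ` on `ℝ × [0, T]`
at most `G (T H + T^{1−γ/2} M)`. -/
theorem time_convolution_holder_seminorm_bound
    (γ T G M H : ℝ) (hγ0 : 0 < γ) (hγ1 : γ < 1) (hT : 0 < T)
    (g : ℝ → ℝ) (v : ℝ → ℝ → ℝ)
    (hg_cont : ContinuousOn g (Set.Icc 0 T))
    (hg_bd : ∀ r ∈ Set.Icc (0 : ℝ) T, |g r| ≤ G)
    (hv_cont : ∀ x : ℝ, ContinuousOn (fun s => v x s) (Set.Icc 0 T))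
    (hv_bd : ∀ x : ℝ, ∀ s ∈ Set.Icc (0 : ℝ) T, |v x s| ≤ M)
    (hv_hol : ∀ x y : ℝ, ∀ s ∈ Set.Icc (0 : ℝ) T, ∀ t ∈ Set.Icc (0 : ℝ) T,
      |v x t - v y s| ≤ H * (|x - y| ^ γ + |t - s| ^ (γ / 2))) :
    ∀ x y : ℝ, ∀ s ∈ Set.Icc (0 : ℝ) T, ∀ t ∈ Set.Icc (0 : ℝ) T,
      |(∫ r in (0 : ℝ)..t, g (t - r) * v x r) - ∫ r in (0 : ℝ)..s, g (s - r) * v y r| ≤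
        G * (T * H + T ^ (1 - γ / 2) * M) * (|x - y| ^ γ + |t - s| ^ (γ / 2)) :=
  time_convolution_holder_seminorm_bound_general γ T G M H hγ1 g v hg_cont hg_bd hv_cont hv_bd
    hv_hol
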